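/- Let H be a traceless Hermitian d×d complex matrix with d distinct eigenvalues. Then the J-closure of {H} has real dimension exactly d − 1. -/

import Mathlib

open Matrix

/-- The traceless Jordan product `J(A,B) = (AB + BA)/2 − (Tr(AB)/d)·I`. -/
noncomputable def tracelessJordan {d : ℕ} (A B : Matrix (Fin d) (Fin d) ℂ) :
    Matrix (Fin d) (Fin d) ℂ :=
  (2⁻¹ : ℂ) • (A * B + B * A) - ((A * B).trace / (d : ℂ)) • (1 : Matrix (Fin d) (Fin d) ℂ)

/-- An `ℝ`-subspace of the `d × d` complex matrices is J-closed if it is closed under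
the traceless Jordan product. -/
def JClosed {d : ℕ} (W : Submodule ℝ (Matrix (Fin d) (Fin d) ℂ)) : Prop :=
  ∀ X ∈ W, ∀ Y ∈ W, tracelessJordan X Y ∈ W

/-- The J-closure of a set of matrices: the smallest J-closed `ℝ`-subspace
containing it. -/
noncomputable def JClosure {d : ℕ} (S : Set (Matrix (Fin d) (Fin d) ℂ)) :
    Submodule ℝ (Matrix (Fin d) (Fin d) ℂ) :=
  sInf {W | JClosed W ∧ S ⊆ W}

/-!
Write `T M = M - (tr M / d) • 1` for the traceless part. For commuting `A`, `B`,
`J(T A, T B) = T (A B) - (tr B / d) • T A - (tr A / d) • T B`. Traces of powers of a Hermitian `H`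
are real, so the real span of the `T (H ^ k)`, `k ≥ 1`, is J-closed; conversely, taking `B = H`
(where `tr H = 0` and `T H = H`) shows inductively that every `T (H ^ k)` lies in the J-closure
of `{H}`. Hence the J-closure is this span.

The characteristic polynomial of `H` has real coefficients, so every `H ^ k` is a real combination
of `1, H, …, H ^ (d - 1)`, and the span is spanned by `T (H ^ k)`, `1 ≤ k < d`. With `d` distinct
eigenvalues the minimal polynomial of `H` has degree `d`, so `1, H, …, H ^ (d - 1)` are linearly
independent; as the kernel of `T` is `ℂ ∙ 1`, the `T (H ^ k)`, `1 ≤ k < d`, are independent too.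
-/

open Polynomial

theorem Polynomial.pow_mem_span_pow_of_aeval_eq_zero {R A : Type*} [CommRing R] [Nontrivial R]
    [Ring A] [Algebra R A] {x : A} {P : R[X]} (hP : P.Monic) (hx : aeval x P = 0) (m : ℕ) :
    x ^ m ∈ Submodule.span R ((x ^ ·) '' Set.Iio P.natDegree) := by
  have hdeg : (X ^ m %ₘ P).degree < P.natDegree :=
    degree_eq_natDegree hP.ne_zero ▸ degree_modByMonic_lt _ hP
  rw [← aeval_X_pow (R := R), ← aeval_modByMonic_eq_self_of_root hx, aeval_eq_sum_range]
  refine Submodule.sum_mem _ fun i _ => ?_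
  by_cases hi : i < P.natDegree
  · exact Submodule.smul_mem _ _ (Submodule.subset_span ⟨i, hi, rfl⟩)
  · rw [coeff_eq_zero_of_degree_lt (hdeg.trans_le (by exact_mod_cast not_lt.mp hi)), zero_smul]
    exact Submodule.zero_mem _

theorem Matrix.isRoot_of_isRoot_charpoly_of_aeval_eq_zero {K n : Type*} [Field K] [Fintype n]
    [DecidableEq n] {M : Matrix n n K} {p : K[X]} (hp : aeval M p = 0) {μ : K}
    (hμ : M.charpoly.IsRoot μ) : p.IsRoot μ := by
  have hmem := spectrum.subset_polynomial_aeval M p ⟨μ, mem_spectrum_of_isRoot_charpoly hμ, rfl⟩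
  rw [hp, spectrum.mem_iff, sub_zero] at hmem
  by_contra hne
  exact hmem ((isUnit_iff_ne_zero.mpr hne).map (algebraMap K (Matrix n n K)))

theorem Matrix.card_roots_charpoly_le_natDegree_minpoly {K n : Type*} [Field K] [DecidableEq K]
    [Fintype n] [DecidableEq n] (M : Matrix n n K) :
    M.charpoly.roots.toFinset.card ≤ (minpoly K M).natDegree := by
  have hsub : M.charpoly.roots.toFinset ⊆ (minpoly K M).roots.toFinset := by
    intro μ hμ
    rw [Multiset.mem_toFinset] at hμ ⊢
    exact (mem_roots (minpoly.ne_zero M.isIntegral)).mpr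
      (isRoot_of_isRoot_charpoly_of_aeval_eq_zero (minpoly.aeval K M) (isRoot_of_mem_roots hμ))
  exact (Finset.card_le_card hsub).trans
    ((Multiset.toFinset_card_le _).trans (card_roots' _))

theorem Matrix.linearIndependent_pow_of_le_card_roots_charpoly {K n : Type*} [Field K]
    [DecidableEq K] [Fintype n] [DecidableEq n] (M : Matrix n n K) {m : ℕ}
    (hm : m ≤ M.charpoly.roots.toFinset.card) :
    LinearIndependent K fun i : Fin m => M ^ (i : ℕ) :=
  (linearIndependent_pow M).comp
    (Fin.castLE (hm.trans M.card_roots_charpoly_le_natDegree_minpoly)) (Fin.castLE_injective _)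

theorem Matrix.IsHermitian.pow_mem_span_pow {n : Type*} [Fintype n] [DecidableEq n]
    {A : Matrix n n ℂ} (hA : A.IsHermitian) (m : ℕ) :
    A ^ m ∈ Submodule.span ℝ ((A ^ ·) '' Set.Iio (Fintype.card n)) := by
  set P : ℝ[X] := ∏ i, (X - C (hA.eigenvalues i))
  have hP : P.Monic := monic_prod_of_monic _ _ fun i _ => monic_X_sub_C _
  have hdeg : P.natDegree = Fintype.card n := natDegree_finsetProd_X_sub_C_eq_card _ _
  have hAP : aeval A P = 0 := by
    have hmap : P.map (algebraMap ℝ ℂ) = A.charpoly := by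
      simp [P, Polynomial.map_prod, hA.charpoly_eq]
    rw [← aeval_map_algebraMap ℂ, hmap, aeval_self_charpoly]
  exact hdeg ▸ pow_mem_span_pow_of_aeval_eq_zero hP hAP m

section TracelessPart

variable {d : ℕ}

noncomputable def tracelessPart : Matrix (Fin d) (Fin d) ℂ →ₗ[ℂ] Matrix (Fin d) (Fin d) ℂ where
  toFun M := M - (M.trace / d) • 1
  map_add' M N := by rw [trace_add, add_div, add_smul]; abel
  map_smul' c M := by rw [trace_smul, smul_eq_mul, mul_div_assoc, ← smul_smul, smul_sub]; rfl

theorem tracelessPart_apply (M : Matrix (Fin d) (Fin d) ℂ) :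
    tracelessPart M = M - (M.trace / d) • 1 :=
  rfl

theorem tracelessPart_one : tracelessPart (1 : Matrix (Fin d) (Fin d) ℂ) = 0 := by
  rcases eq_or_ne d 0 with rfl | hd
  · exact Subsingleton.elim _ _
  · rw [tracelessPart_apply, trace_one, Fintype.card_fin,
      div_self (Nat.cast_ne_zero.mpr hd), one_smul, sub_self]

theorem ker_tracelessPart_le :
    LinearMap.ker (tracelessPart (d := d)) ≤ ℂ ∙ (1 : Matrix (Fin d) (Fin d) ℂ) := by
  intro M hM
  rw [LinearMap.mem_ker, tracelessPart_apply, sub_eq_zero] at hM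
  exact hM ▸ Submodule.smul_mem _ _ (Submodule.mem_span_singleton_self 1)

theorem tracelessJordan_eq_tracelessPart (A B : Matrix (Fin d) (Fin d) ℂ) :
    tracelessJordan A B = tracelessPart ((2⁻¹ : ℂ) • (A * B + B * A)) := by
  rw [tracelessJordan, tracelessPart_apply, trace_smul, trace_add, trace_mul_comm B A,
    smul_eq_mul, ← two_mul, inv_mul_cancel_left₀ two_ne_zero]

theorem tracelessJordan_comm (A B : Matrix (Fin d) (Fin d) ℂ) :
    tracelessJordan A B = tracelessJordan B A := by
  rw [tracelessJordan_eq_tracelessPart, tracelessJordan_eq_tracelessPart, add_comm]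

theorem tracelessJordan_tracelessPart_of_commute {A B : Matrix (Fin d) (Fin d) ℂ}
    (h : Commute A B) :
    tracelessJordan (tracelessPart A) (tracelessPart B) =
      tracelessPart (A * B) - (B.trace / d) • tracelessPart A -
        (A.trace / d) • tracelessPart B := by
  have hexpand :
      (2⁻¹ : ℂ) • (tracelessPart A * tracelessPart B + tracelessPart B * tracelessPart A) =
        A * B - (B.trace / d) • A - (A.trace / d) • B + (A.trace / d * (B.trace / d)) • 1 := by
    simp only [tracelessPart_apply, sub_mul, mul_sub, smul_mul_assoc, mul_smul_comm, one_mul,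
      mul_one, h.eq]
    module
  rw [tracelessJordan_eq_tracelessPart, hexpand]
  simp only [map_add, map_sub, map_smul, tracelessPart_one, smul_zero, add_zero]

end TracelessPart

section JordanClosure

variable {d : ℕ}

theorem tracelessJordan_add_left (A₁ A₂ B : Matrix (Fin d) (Fin d) ℂ) :
    tracelessJordan (A₁ + A₂) B = tracelessJordan A₁ B + tracelessJordan A₂ B := by
  simp only [tracelessJordan_eq_tracelessPart, ← map_add, ← smul_add, add_mul, mul_add]
  abel_nf

theorem tracelessJordan_smul_left (c : ℂ) (A B : Matrix (Fin d) (Fin d) ℂ) :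
    tracelessJordan (c • A) B = c • tracelessJordan A B := by
  simp only [tracelessJordan_eq_tracelessPart, ← map_smul, smul_mul_assoc, mul_smul_comm,
    ← smul_add, smul_comm c]

noncomputable def tracelessJordanBilin :
    Matrix (Fin d) (Fin d) ℂ →ₗ[ℂ] Matrix (Fin d) (Fin d) ℂ →ₗ[ℂ] Matrix (Fin d) (Fin d) ℂ :=
  LinearMap.mk₂ ℂ tracelessJordan tracelessJordan_add_left tracelessJordan_smul_left
    (fun A B₁ B₂ => by simp only [tracelessJordan_comm A, tracelessJordan_add_left])
    (fun c A B => by simp only [tracelessJordan_comm A, tracelessJordan_smul_left])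

theorem JClosed_span {S : Set (Matrix (Fin d) (Fin d) ℂ)}
    (h : ∀ X ∈ S, ∀ Y ∈ S, tracelessJordan X Y ∈ Submodule.span ℝ S) :
    JClosed (Submodule.span ℝ S) :=
  Submodule.map₂_le.mp <|
    (Submodule.map₂_span_span ℝ (tracelessJordanBilin.restrictScalars₁₂ ℝ ℝ) S S).le.trans
      (Submodule.span_le.mpr (Set.image2_subset_iff.mpr h))

theorem JClosed_JClosure (S : Set (Matrix (Fin d) (Fin d) ℂ)) : JClosed (JClosure S) :=
  fun X hX Y hY => Submodule.mem_sInf.mpr fun W hW =>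
    hW.1 X (Submodule.mem_sInf.mp hX W hW) Y (Submodule.mem_sInf.mp hY W hW)

theorem subset_JClosure (S : Set (Matrix (Fin d) (Fin d) ℂ)) : S ⊆ JClosure S :=
  fun _ hX => Submodule.mem_sInf.mpr fun _ hW => hW.2 hX

theorem JClosure_le {S : Set (Matrix (Fin d) (Fin d) ℂ)}
    {W : Submodule ℝ (Matrix (Fin d) (Fin d) ℂ)} (hW : JClosed W) (hS : S ⊆ W) : JClosure S ≤ W :=
  sInf_le ⟨hW, hS⟩

end JordanClosure

theorem Matrix.IsHermitian.trace_div_smul_mem {n E : Type*} [Fintype n] [AddCommGroup E]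
    [Module ℂ E] {A : Matrix n n ℂ} (hA : A.IsHermitian) (k : ℕ) {W : Submodule ℝ E} {x : E}
    (hx : x ∈ W) : (A.trace / k) • x ∈ W := by
  classical
  have hreal : A.trace / k = (((∑ i, hA.eigenvalues i) / k : ℝ) : ℂ) := by
    rw [hA.trace_eq_sum_eigenvalues]
    push_cast
    rfl
  rw [hreal, Complex.coe_smul]
  exact W.smul_mem _ hx

section HermitianPowers

variable {d : ℕ} {A : Matrix (Fin d) (Fin d) ℂ}

theorem tracelessPart_of_trace_eq_zero (hA : A.trace = 0) : tracelessPart A = A := by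
  rw [tracelessPart_apply, hA, zero_div, zero_smul, sub_zero]

theorem JClosed_span_tracelessPart_pow_succ (hA : A.IsHermitian) :
    JClosed (Submodule.span ℝ (Set.range fun k : ℕ => tracelessPart (A ^ (k + 1)))) := by
  refine JClosed_span ?_
  rintro _ ⟨a, rfl⟩ _ ⟨b, rfl⟩
  set W := Submodule.span ℝ (Set.range fun k : ℕ => tracelessPart (A ^ (k + 1)))
  have hmem (k : ℕ) : tracelessPart (A ^ (k + 1)) ∈ W := Submodule.subset_span ⟨k, rfl⟩
  rw [tracelessJordan_tracelessPart_of_commute (Commute.pow_pow_self A _ _), ← pow_add,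
    show a + 1 + (b + 1) = a + b + 1 + 1 by ring]
  exact W.sub_mem (W.sub_mem (hmem _) ((hA.pow _).trace_div_smul_mem d (hmem a)))
    ((hA.pow _).trace_div_smul_mem d (hmem b))

theorem JClosure_singleton_eq_span_tracelessPart_pow_succ (hA : A.IsHermitian)
    (htr : A.trace = 0) :
    JClosure {A} = Submodule.span ℝ (Set.range fun k : ℕ => tracelessPart (A ^ (k + 1))) := by
  refine le_antisymm (JClosure_le (JClosed_span_tracelessPart_pow_succ hA)
    (Set.singleton_subset_iff.mpr (Submodule.subset_span
      ⟨0, by simp only [zero_add, pow_one, tracelessPart_of_trace_eq_zero htr]⟩)))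
    (Submodule.span_le.mpr (Set.range_subset_iff.mpr fun k => ?_))
  have hA_mem : A ∈ JClosure {A} := subset_JClosure _ rfl
  induction k with
  | zero => rwa [zero_add, pow_one, tracelessPart_of_trace_eq_zero htr]
  | succ k ih =>
    have hrec := tracelessJordan_tracelessPart_of_commute (Commute.pow_self A (k + 1))
    rw [← pow_succ, tracelessPart_of_trace_eq_zero htr, htr, zero_div, zero_smul, sub_zero,
      eq_sub_iff_add_eq] at hrec
    rw [← hrec]
    exact Submodule.add_mem _ (JClosed_JClosure _ _ ih _ hA_mem)
      ((hA.pow _).trace_div_smul_mem d hA_mem)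

theorem span_tracelessPart_pow_succ_eq_span_fin (hA : A.IsHermitian) :
    Submodule.span ℝ (Set.range fun k : ℕ => tracelessPart (A ^ (k + 1))) =
      Submodule.span ℝ (Set.range fun k : Fin (d - 1) => tracelessPart (A ^ ((k : ℕ) + 1))) := by
  refine le_antisymm (Submodule.span_le.mpr (Set.range_subset_iff.mpr fun k => ?_))
    (Submodule.span_mono (Set.range_subset_iff.mpr fun k => ⟨k, rfl⟩))
  have hpow := Submodule.mem_map_of_mem (f := tracelessPart.restrictScalars ℝ)
    (by simpa using hA.pow_mem_span_pow (k + 1))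
  rw [← Submodule.span_image, ← Set.image_comp] at hpow
  refine Submodule.span_le.mpr ?_ hpow
  rintro _ ⟨i, hi, rfl⟩
  rcases i with _ | i
  · simp [tracelessPart_one]
  · exact Submodule.subset_span ⟨⟨i, by rw [Set.mem_Iio] at hi; omega⟩, rfl⟩

theorem linearIndependent_tracelessPart_pow_succ
    (hA : LinearIndependent ℂ fun i : Fin d => A ^ (i : ℕ)) :
    LinearIndependent ℝ fun k : Fin (d - 1) => tracelessPart (A ^ ((k : ℕ) + 1)) := by
  rcases d with _ | d
  · exact linearIndependent_empty_type (ι := Fin 0)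
  have hcons : (fun i : Fin (d + 1) => A ^ (i : ℕ)) =
      Fin.cons 1 fun k : Fin d => A ^ ((k : ℕ) + 1) := by
    ext1 i
    refine Fin.cases ?_ (fun k => ?_) i <;> simp
  rw [hcons, linearIndependent_finCons] at hA
  have hdisj : Disjoint (Submodule.span ℂ (Set.range fun k : Fin d => A ^ ((k : ℕ) + 1)))
      (LinearMap.ker tracelessPart) :=
    ((Submodule.disjoint_span_singleton' one_ne_zero).mpr hA.2).mono_right ker_tracelessPart_le
  exact (hA.1.map hdisj).restrict_scalars' ℝ

end HermitianPowers

theorem JClosure_singleton_dim_eq_of_distinct_eigenvalues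
    (d : ℕ) (H : Matrix (Fin d) (Fin d) ℂ)
    (hH : H.IsHermitian) (htr : H.trace = 0)
    (hdist : (Matrix.charpoly H).roots.toFinset.card = d) :
    Module.finrank ℝ (JClosure {H}) = d - 1 := by
  rw [JClosure_singleton_eq_span_tracelessPart_pow_succ hH htr,
    span_tracelessPart_pow_succ_eq_span_fin hH,
    finrank_span_eq_card (linearIndependent_tracelessPart_pow_succ
      (H.linearIndependent_pow_of_le_card_roots_charpoly hdist.ge)), Fintype.card_fin]
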